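/- The Generalized Lamport's Bakery (GLB) algorithm satisfies the Starvation Freedom property: in every execution in which no process stays in the critical section forever, every process that enters the entry section eventually enters the critical section. -/

import Mathlib

/-! ## Model of the Generalized Lamport's Bakery (GLB) algorithm -/

/-- Program counter of a process in the GLB algorithm.  The doorway is
`setChoosing s` (Choosing[i]:=true), `setSession s` (Session[i]:=s),
`scan s j m` (computing the max of the other token numbers, `j` is the next index
to inspect and `m` the running maximum), `setToken s m` (Token[i]:=m+1) and
`unsetChoosing s` (Choosing[i]:=false).  The waiting room consists of the two
busy-wait checks `wait1 s j` and `wait2 s j`, and the exit section of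
`exit1` (Token[i]:=0) and `exit2` (Session[i]:=0). -/
inductive GLBPc : Type
  | remainder
  | setChoosing (s : ℕ)
  | setSession (s : ℕ)
  | scan (s : ℕ) (j : ℕ) (m : ℕ)
  | setToken (s : ℕ) (m : ℕ)
  | unsetChoosing (s : ℕ)
  | wait1 (s : ℕ) (j : ℕ)
  | wait2 (s : ℕ) (j : ℕ)
  | cs (s : ℕ)
  | exit1
  | exit2
  deriving DecidableEq

/-- Global state: the shared arrays together with each process's control state. -/
structure GLBState (N : ℕ) where
  session : Fin N → ℕ
  token : Fin N → ℕ
  choosing : Fin N → Bool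
  pc : Fin N → GLBPc

def glbInit (N : ℕ) : GLBState N :=
  { session := fun _ => 0, token := fun _ => 0, choosing := fun _ => false,
    pc := fun _ => GLBPc.remainder }

/-- One atomic step of process `i` of the GLB algorithm, transforming state `st`
into `st'`.  A process at `remainder` may stay put or pick an arbitrary positive
session; a failed busy-wait check is a stuttering step; a process in the CS may
stay or move to the exit section. -/
def glbStep {N : ℕ} (st : GLBState N) (i : Fin N) (st' : GLBState N) : Prop :=
  match st.pc i with
  | .remainder =>
      st' = st ∨ ∃ s : ℕ, 0 < s ∧
        st' = { st with pc := Function.update st.pc i (.setChoosing s) }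
  | .setChoosing s =>
      st' = { st with choosing := Function.update st.choosing i true,
                      pc := Function.update st.pc i (.setSession s) }
  | .setSession s =>
      st' = { st with session := Function.update st.session i s,
                      pc := Function.update st.pc i (.scan s 0 0) }
  | .scan s j m =>
      if h : j < N then
        st' = { st with pc := Function.update st.pc i (.scan s (j+1)
                  (if (⟨j, h⟩ : Fin N) = i then m else max m (st.token ⟨j, h⟩))) }
      else
        st' = { st with pc := Function.update st.pc i (.setToken s m) }
  | .setToken s m =>
      st' = { st with token := Function.update st.token i (m + 1),
                      pc := Function.update st.pc i (.unsetChoosing s) }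
  | .unsetChoosing s =>
      st' = { st with choosing := Function.update st.choosing i false,
                      pc := Function.update st.pc i (.wait1 s 0) }
  | .wait1 s j =>
      if h : j < N then
        if st.choosing ⟨j, h⟩ = false ∨ st.session ⟨j, h⟩ = 0 ∨ st.session ⟨j, h⟩ = s then
          st' = { st with pc := Function.update st.pc i (.wait2 s j) }
        else st' = st
      else
        st' = { st with pc := Function.update st.pc i (.cs s) }
  | .wait2 s j =>
      if h : j < N then
        if (st.token i < st.token ⟨j, h⟩ ∨ (st.token i = st.token ⟨j, h⟩ ∧ i.val < j)) ∨
            st.token ⟨j, h⟩ = 0 ∨ st.session ⟨j, h⟩ = 0 ∨ st.session ⟨j, h⟩ = s then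
          st' = { st with pc := Function.update st.pc i (.wait1 s (j+1)) }
        else st' = st
      else st' = st
  | .cs _ =>
      st' = st ∨ st' = { st with pc := Function.update st.pc i .exit1 }
  | .exit1 =>
      st' = { st with token := Function.update st.token i 0,
                      pc := Function.update st.pc i .exit2 }
  | .exit2 =>
      st' = { st with session := Function.update st.session i 0,
                      pc := Function.update st.pc i .remainder }

/-- An execution of the GLB algorithm: an interleaving of atomic steps
(`sched n` is the process taking the `n`-th step), starting from the initial
state, in which every process outside its remainder section eventually takes
its next step. -/
structure GLBExec (N : ℕ) where
  state : ℕ → GLBState N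
  sched : ℕ → Fin N
  init : state 0 = glbInit N
  step : ∀ n, glbStep (state n) (sched n) (state (n + 1))
  fair : ∀ (i : Fin N) (n : ℕ), (state n).pc i ≠ GLBPc.remainder →
           ∃ m, n ≤ m ∧ sched m = i

/-- Process `i` is in the critical section. -/
def glbInCS {N : ℕ} (st : GLBState N) (i : Fin N) : Prop := ∃ s, st.pc i = GLBPc.cs s

/-- Process `i` is in the entry section (doorway or waiting room). -/
def glbInEntry {N : ℕ} (st : GLBState N) (i : Fin N) : Prop :=
  match st.pc i with
  | .remainder => False
  | .cs _ => False
  | .exit1 => False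
  | .exit2 => False
  | _ => True

/-- At step `n`, process `i` leaves the remainder and enters the doorway,
requesting session `s`. -/
def glbEntersDoorway {N : ℕ} (e : GLBExec N) (i : Fin N) (s : ℕ) (n : ℕ) : Prop :=
  (e.state n).pc i = GLBPc.remainder ∧ (e.state (n+1)).pc i = GLBPc.setChoosing s

/-- At step `n`, process `i` completes its doorway (executes Choosing[i]:=false). -/
def glbCompletesDoorway {N : ℕ} (e : GLBExec N) (i : Fin N) (s : ℕ) (n : ℕ) : Prop :=
  (e.state n).pc i = GLBPc.unsetChoosing s ∧ (e.state (n+1)).pc i = GLBPc.wait1 s 0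

/-- At step `n`, process `i` enters the critical section. -/
def glbEntersCS {N : ℕ} (e : GLBExec N) (i : Fin N) (n : ℕ) : Prop :=
  ¬ glbInCS (e.state n) i ∧ glbInCS (e.state (n+1)) i

/-- Process `i` does not pass through the remainder section during `(a, b]`
(so times `a` and `b` belong to the same invocation of `i`). -/
def glbActiveThrough {N : ℕ} (e : GLBExec N) (i : Fin N) (a b : ℕ) : Prop :=
  ∀ k, a < k → k ≤ b → (e.state k).pc i ≠ GLBPc.remainder

/-! ### Remote memory references in the cache-coherent (CC) model -/

/-- The shared variables of the GLB algorithm. -/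
inductive GLBVar (N : ℕ) : Type
  | session (j : Fin N)
  | token (j : Fin N)
  | choosing (j : Fin N)
  deriving DecidableEq

/-- Shared variables read by the next step of process `i` in state `st`. -/
def glbReads {N : ℕ} (st : GLBState N) (i : Fin N) : Finset (GLBVar N) :=
  match st.pc i with
  | .scan _ j _ => if h : j < N then {GLBVar.token ⟨j, h⟩} else ∅
  | .wait1 _ j => if h : j < N then {GLBVar.choosing ⟨j, h⟩, GLBVar.session ⟨j, h⟩} else ∅
  | .wait2 _ j => if h : j < N then
      {GLBVar.token i, GLBVar.token ⟨j, h⟩, GLBVar.session ⟨j, h⟩} else ∅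
  | _ => ∅

/-- Shared variables written by the next step of process `i` in state `st`. -/
def glbWrites {N : ℕ} (st : GLBState N) (i : Fin N) : Finset (GLBVar N) :=
  match st.pc i with
  | .setChoosing _ => {GLBVar.choosing i}
  | .setSession _ => {GLBVar.session i}
  | .setToken _ _ => {GLBVar.token i}
  | .unsetChoosing _ => {GLBVar.choosing i}
  | .exit1 => {GLBVar.token i}
  | .exit2 => {GLBVar.session i}
  | _ => ∅

/-- `glbCached e n p v` holds iff just before step `n`, process `p` holds a valid
cached copy of variable `v`: a copy is acquired by reading `v` and stays valid
until some process writes `v`. -/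
def glbCached {N : ℕ} (e : GLBExec N) : ℕ → Fin N → GLBVar N → Bool
  | 0, _, _ => false
  | n + 1, p, v =>
      (glbCached e n p v || (decide (e.sched n = p) && decide (v ∈ glbReads (e.state n) p)))
        && ! decide (v ∈ glbWrites (e.state n) (e.sched n))

/-- The number of remote memory references incurred by step `n` of the execution:
every write is an RMR, and a read is an RMR iff the stepping process holds no
valid cached copy. -/
def glbStepRMR {N : ℕ} (e : GLBExec N) (n : ℕ) : ℕ :=
  (glbWrites (e.state n) (e.sched n)).card +
    ((glbReads (e.state n) (e.sched n)).filter
      (fun v => glbCached e n (e.sched n) v = false)).card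


/-!
Suppose a process `p` waits forever with ticket `(t, p)` (token and index, ordered
lexicographically). A process *may overtake* `p` if it holds a smaller ticket or its doorway scan
has passed index `p` with running maximum below `t`; while `p` keeps token `t`, no process starts
to qualify. By well-founded induction on tickets, a qualifying process that reaches the waiting
room enters the CS and, leaving it, drops its token; so eventually none qualifies and `p` holds
the minimal ticket forever. A process of a conflicting session that is still choosing then gets
stuck before index `p` of its waiting loop and stops choosing, so from some time on both
busy-waits of `p` pass at every index and `p` enters the CS.
-/

open Filter

section

variable {N : ℕ}

theorem glbStep_frame {st st' : GLBState N} {i j : Fin N} (h : glbStep st i st') (hj : j ≠ i) :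
    st'.pc j = st.pc j ∧ st'.session j = st.session j ∧ st'.token j = st.token j ∧
      st'.choosing j = st.choosing j := by
  unfold glbStep at h
  split at h <;> (repeat split at h) <;>
    (first | subst h | obtain rfl | ⟨_, _, rfl⟩ := h) <;>
    simp [Function.update_of_ne hj]

def LocalInv (st : GLBState N) (q : Fin N) : Prop :=
  match st.pc q with
  | .remainder => st.token q = 0 ∧ st.session q = 0 ∧ st.choosing q = false
  | .setChoosing s => st.token q = 0 ∧ st.session q = 0 ∧ st.choosing q = false ∧ s ≠ 0
  | .setSession s => st.token q = 0 ∧ st.session q = 0 ∧ st.choosing q = true ∧ s ≠ 0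
  | .scan s _ _ | .setToken s _ =>
      st.token q = 0 ∧ st.session q = s ∧ st.choosing q = true ∧ s ≠ 0
  | .unsetChoosing s => st.token q ≠ 0 ∧ st.session q = s ∧ st.choosing q = true ∧ s ≠ 0
  | .wait1 s _ => st.token q ≠ 0 ∧ st.session q = s ∧ st.choosing q = false ∧ s ≠ 0
  | .wait2 s j => st.token q ≠ 0 ∧ st.session q = s ∧ st.choosing q = false ∧ s ≠ 0 ∧ j < N
  | .cs _ | .exit1 => st.choosing q = false
  | .exit2 => st.token q = 0 ∧ st.choosing q = false

theorem LocalInv.step {st st' : GLBState N} {i q : Fin N} (hq : LocalInv st q)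
    (h : glbStep st i st') : LocalInv st' q := by
  by_cases hqi : q = i
  · subst hqi
    unfold LocalInv at hq
    unfold glbStep at h
    split at h <;> (repeat split at h) <;>
      (first | subst h | obtain rfl | ⟨_, _, rfl⟩ := h) <;>
      simp_all [LocalInv, Nat.pos_iff_ne_zero]
  · obtain ⟨hpc, hs, ht, hc⟩ := glbStep_frame h hqi
    unfold LocalInv at hq ⊢
    rwa [hpc, hs, ht, hc]

def InDoorway (s : ℕ) : GLBPc → Prop
  | .setChoosing s' | .setSession s' | .scan s' _ _ | .setToken s' _ | .unsetChoosing s' => s' = s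
  | _ => False

def doorwayRank (N : ℕ) : GLBPc → ℕ
  | .setChoosing _ => N + 5
  | .setSession _ => N + 4
  | .scan _ j _ => N - j + 3
  | .setToken _ _ => 2
  | _ => 1

def IsWaiting (s : ℕ) : GLBPc → Prop
  | .wait1 s' _ | .wait2 s' _ => s' = s
  | _ => False

def waitRank (N : ℕ) : GLBPc → ℕ
  | .wait1 _ j => 2 * (N - j) + 1
  | .wait2 _ j => 2 * (N - j)
  | _ => 0

theorem exists_inDoorway_or_isWaiting_of_glbInEntry {st : GLBState N} {i : Fin N}
    (h : glbInEntry st i) : ∃ s, InDoorway s (st.pc i) ∨ IsWaiting s (st.pc i) := by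
  unfold glbInEntry at h
  rcases hpc : st.pc i with _ | s | s | ⟨s, j, mm⟩ | ⟨s, mm⟩ | s | ⟨s, j⟩ | ⟨s, j⟩ | s | _ | _ <;>
    simp [hpc, InDoorway, IsWaiting] at h ⊢

theorem LocalInv.of_isWaiting {st : GLBState N} {q : Fin N} {s : ℕ} (hinv : LocalInv st q)
    (hw : IsWaiting s (st.pc q)) :
    st.token q ≠ 0 ∧ st.session q = s ∧ st.choosing q = false ∧ s ≠ 0 := by
  unfold LocalInv at hinv
  split at hinv <;> rename_i hpc <;> simp only [IsWaiting, hpc] at hw <;> subst hw <;> tauto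

theorem glbStep_of_inDoorway {st st' : GLBState N} {i : Fin N} {s : ℕ}
    (hd : InDoorway s (st.pc i)) (h : glbStep st i st') :
    st'.pc i = .wait1 s 0 ∨
      InDoorway s (st'.pc i) ∧ doorwayRank N (st'.pc i) < doorwayRank N (st.pc i) := by
  unfold glbStep at h
  split at h <;> rename_i hpc <;> simp only [InDoorway, hpc] at hd <;>
    (repeat split at h) <;> subst h hd <;>
    simp only [Function.update_self, InDoorway, doorwayRank, hpc, reduceCtorEq, true_and, false_or,
      true_or] <;> omega

theorem glbStep_of_isWaiting {st st' : GLBState N} {i : Fin N} {s : ℕ}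
    (hw : IsWaiting s (st.pc i)) (h : glbStep st i st') :
    (IsWaiting s (st'.pc i) ∨ st'.pc i = .cs s) ∧ st'.token i = st.token i := by
  unfold glbStep at h
  split at h <;> rename_i hpc <;> simp only [IsWaiting, hpc] at hw <;>
    (repeat split at h) <;> subst h hw <;> simp [IsWaiting, hpc]

theorem glbStep_of_cs {st st' : GLBState N} {i q : Fin N} {s : ℕ} (hq : st.pc q = .cs s)
    (h : glbStep st i st') : st'.pc q = .cs s ∨ st'.pc q = .exit1 := by
  by_cases hqi : q = i
  · subst hqi
    simp only [glbStep, hq] at h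
    obtain rfl | rfl := h <;> simp [hq]
  · exact .inl ((glbStep_frame h hqi).1.trans hq)

def GLBState.ticket (st : GLBState N) (q : Fin N) : ℕ ×ₗ Fin N := toLex (st.token q, q)

theorem GLBState.ticket_lt_ticket_iff {st : GLBState N} {q r : Fin N} :
    st.ticket q < st.ticket r ↔
      st.token q < st.token r ∨ st.token q = st.token r ∧ q.val < r.val := by
  simp only [GLBState.ticket, Prod.Lex.toLex_lt_toLex, Fin.lt_def]

def HasMinimalTicket (st : GLBState N) (p : Fin N) : Prop :=
  ∀ r, r ≠ p → st.token r ≠ 0 → st.ticket p < st.ticket r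

def BlocksWait1 (st : GLBState N) (r : Fin N) (s : ℕ) : Prop :=
  st.choosing r = true ∧ st.session r ≠ 0 ∧ st.session r ≠ s

theorem LocalInv.inDoorway_of_blocksWait1 {st : GLBState N} {q : Fin N} {s : ℕ}
    (hinv : LocalInv st q) (h : BlocksWait1 st q s) : InDoorway (st.session q) (st.pc q) := by
  obtain ⟨hc, hs, -⟩ := h
  unfold LocalInv at hinv
  split at hinv <;> rename_i hpc <;> simp_all [InDoorway]

theorem glbStep_waitRank_lt {st st' : GLBState N} {i : Fin N} {s : ℕ} (hinv : LocalInv st i)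
    (hw : IsWaiting s (st.pc i)) (hfree : ∀ r, ¬ BlocksWait1 st r s)
    (hmin : HasMinimalTicket st i) (h : glbStep st i st') :
    st'.pc i = .cs s ∨ IsWaiting s (st'.pc i) ∧ waitRank N (st'.pc i) < waitRank N (st.pc i) := by
  unfold glbStep at h
  split at h <;> rename_i hpc <;> simp only [IsWaiting, hpc] at hw
  case h_7 s' j =>
    subst hw
    split_ifs at h with hj hpass
    · subst h
      right
      simp [IsWaiting, waitRank, hpc]
    · have := hfree ⟨j, hj⟩
      simp only [BlocksWait1] at this
      grind
    · subst h
      simp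
  case h_8 s' j =>
    subst hw
    simp only [LocalInv, hpc] at hinv
    obtain ⟨-, hsess, -, -, hj⟩ := hinv
    rw [dif_pos hj, if_pos] at h
    · subst h
      right
      simp only [IsWaiting, Function.update_self, waitRank, hpc, true_and]
      omega
    · by_cases hji : (⟨j, hj⟩ : Fin N) = i
      · subst hji
        exact .inr (.inr (.inr hsess))
      · by_cases h0 : st.token ⟨j, hj⟩ = 0
        · exact .inr (.inl h0)
        · exact .inl (GLBState.ticket_lt_ticket_iff.1 (hmin _ hji h0))

def IsWaitingAtMost (s k : ℕ) (c : GLBPc) : Prop := ∃ j ≤ k, c = .wait1 s j ∨ c = .wait2 s j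

theorem IsWaitingAtMost.isWaiting {s k : ℕ} {c : GLBPc} (h : IsWaitingAtMost s k c) :
    IsWaiting s c := by
  obtain ⟨j, -, rfl | rfl⟩ := h <;> rfl

theorem isWaitingAtMost_of_glbStep {st st' : GLBState N} {i p r : Fin N} {s sr : ℕ}
    (hp : IsWaiting s (st.pc p)) (hpinv : LocalInv st p) (hrinv : LocalInv st r)
    (hmin : HasMinimalTicket st p) (hsr : sr ≠ s) (hr : IsWaitingAtMost sr p (st.pc r))
    (h : glbStep st i st') : IsWaitingAtMost sr p (st'.pc r) := by
  by_cases hri : r = i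
  swap
  · rwa [(glbStep_frame h hri).1]
  subst hri
  have hrp : r ≠ p := by
    rintro rfl
    obtain ⟨j, -, hpc | hpc⟩ := hr <;> rw [hpc] at hp <;> exact hsr hp
  obtain ⟨htp, hsp, -, hs⟩ := hpinv.of_isWaiting hp
  obtain ⟨htr, -, -, -⟩ := hrinv.of_isWaiting hr.isWaiting
  obtain ⟨j, hjp, hpc | hpc⟩ := hr
  · simp only [glbStep, hpc, dif_pos (hjp.trans_lt p.isLt)] at h
    split_ifs at h <;> subst h <;> exact ⟨j, hjp, by simp [hpc]⟩
  · simp only [glbStep, hpc, dif_pos (hjp.trans_lt p.isLt)] at h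
    split_ifs at h with hpass <;> subst h
    · -- At index `p` this check fails: `p` has the smaller ticket and a conflicting session.
      refine ⟨j + 1, ?_, by simp⟩
      refine Nat.succ_le_of_lt (hjp.lt_of_ne fun hjp' => ?_)
      rw [show (⟨j, hjp.trans_lt p.isLt⟩ : Fin N) = p from Fin.ext hjp'] at hpass
      have := GLBState.ticket_lt_ticket_iff.1 (hmin r hrp htr)
      omega
    · exact ⟨j, hjp, by simp [hpc]⟩

def MayOvertake (t : ℕ) (p : Fin N) (st : GLBState N) (q : Fin N) : Prop :=
  (st.token q ≠ 0 ∧ st.ticket q < toLex (t, p)) ∨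
    (∃ s j m, st.pc q = .scan s j m ∧ p.val < j ∧ m < t) ∨
    ∃ s m, st.pc q = .setToken s m ∧ m < t

theorem mayOvertake_of_glbStep {st st' : GLBState N} {i p q : Fin N} {t : ℕ}
    (h : glbStep st i st') (hp : st.token p = t) (hqp : q ≠ p) (hq : MayOvertake t p st' q) :
    MayOvertake t p st q := by
  by_cases hqi : q = i
  swap
  · obtain ⟨hpc, -, htok, -⟩ := glbStep_frame h hqi
    simpa only [MayOvertake, GLBState.ticket, hpc, htok] using hq
  subst hqi
  unfold glbStep at h
  split at h <;> rename_i hpc <;> (repeat split at h) <;>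
    (first | subst h | obtain rfl | ⟨_, _, rfl⟩ := h) <;>
    simp only [MayOvertake, GLBState.ticket, Prod.Lex.toLex_lt_toLex, Function.update_self, hpc,
      ne_eq, reduceCtorEq, false_and, exists_const, or_self, or_false, false_or, true_and, and_true,
      GLBPc.setToken.injEq, GLBPc.scan.injEq, existsAndEq, exists_and_right, Nat.add_eq_zero_iff,
      one_ne_zero, and_false, not_true_eq_false, Nat.lt_add_one_iff, max_lt_iff] at hq ⊢
  all_goals try exact hq
  all_goals try omega
  -- Left: a scan step of `q` at index `j = p`, impossible since either `j` is `q ≠ p` itself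
  -- or reading `p`'s token `t` raises the running maximum to `t`.
  case h_4.isTrue.isTrue =>
    rename_i j _ hj hjq
    refine hq.imp_right fun ⟨hpj, hm⟩ => ⟨hpj.lt_of_ne fun hpj' => hqp ?_, hm⟩
    rw [← hjq]
    exact Fin.ext hpj'.symm
  case h_4.isTrue.isFalse =>
    rename_i j _ hj _
    refine hq.imp_right fun ⟨hpj, hm, htj⟩ => ⟨hpj.lt_of_ne fun hpj' => ?_, hm⟩
    rw [show (⟨j, hj⟩ : Fin N) = p from Fin.ext hpj'.symm, hp] at htj
    exact htj.false

theorem LocalInv.not_mayOvertake {st : GLBState N} {q p : Fin N} {t : ℕ} (hinv : LocalInv st q)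
    (hpc : st.pc q = .remainder ∨ st.pc q = .exit2) : ¬ MayOvertake t p st q := by
  unfold LocalInv at hinv
  rcases hpc with hpc | hpc <;> simp only [hpc] at hinv <;> simp [MayOvertake, hinv.1, hpc]

theorem MayOvertake.ticket_lt {st : GLBState N} {q p : Fin N} {t s : ℕ}
    (h : MayOvertake t p st q) (hw : IsWaiting s (st.pc q)) : st.ticket q < toLex (t, p) := by
  rcases h with ⟨-, h⟩ | ⟨_, _, _, hpc, -⟩ | ⟨_, _, hpc, -⟩
  · exact h
  all_goals rw [hpc] at hw; exact hw.elim

theorem hasMinimalTicket_of_not_mayOvertake {st : GLBState N} {p : Fin N} {t : ℕ}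
    (hp : st.token p = t) (h : ∀ r, r ≠ p → ¬ MayOvertake t p st r) : HasMinimalTicket st p := by
  intro r hrp htr
  have hle : st.ticket p ≤ st.ticket r := by
    simpa [GLBState.ticket, hp, MayOvertake, htr] using (not_or.1 (h r hrp)).1
  exact hle.lt_of_ne fun heq => hrp (congrArg (fun x => (ofLex x).2) heq).symm

end

namespace GLBExec

variable {N : ℕ} (e : GLBExec N)

theorem localInv (m : ℕ) (q : Fin N) : LocalInv (e.state m) q := by
  induction m with
  | zero => simp [e.init, LocalInv, glbInit]
  | succ m ih => exact ih.step (e.step m)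

theorem exists_sched_eq {p : Fin N} {n : ℕ} (h : (e.state n).pc p ≠ .remainder) :
    ∃ m, n ≤ m ∧ e.sched m = p ∧ (e.state m).pc p = (e.state n).pc p := by
  classical
  have hex := e.fair p n h
  obtain ⟨hn, hsched⟩ := Nat.find_spec hex
  refine ⟨Nat.find hex, hn, hsched, ?_⟩
  suffices ∀ k, n ≤ k → k ≤ Nat.find hex → (e.state k).pc p = (e.state n).pc p from
    this _ hn le_rfl
  intro k hk
  induction k, hk using Nat.le_induction with
  | base => intro _; rfl
  | succ k hk ih =>
    intro hkm
    have hsched : p ≠ e.sched k := fun hs => Nat.find_min hex (by omega) ⟨hk, hs.symm⟩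
    rw [(glbStep_frame (e.step k) hsched).1, ih (by omega)]

theorem exists_of_rank_lt (p : Fin N) {a : ℕ} (I T : GLBPc → Prop) (rank : GLBPc → ℕ)
    (hI : ¬ I .remainder)
    (hstep : ∀ m, a ≤ m → e.sched m = p → I ((e.state m).pc p) →
      T ((e.state (m + 1)).pc p) ∨
        I ((e.state (m + 1)).pc p) ∧ rank ((e.state (m + 1)).pc p) < rank ((e.state m).pc p))
    {n : ℕ} (hn : a ≤ n) (h : I ((e.state n).pc p)) : ∃ m, n ≤ m ∧ T ((e.state m).pc p) := by
  induction hr : rank ((e.state n).pc p) using Nat.strong_induction_on generalizing n with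
  | _ r ih =>
    obtain ⟨m, hnm, hsched, hpc⟩ := e.exists_sched_eq (p := p) (n := n) (fun h' => hI (h' ▸ h))
    rcases hstep m (hn.trans hnm) hsched (hpc ▸ h) with hT | ⟨hI', hlt⟩
    · exact ⟨m + 1, by omega, hT⟩
    · obtain ⟨m', hm', hT⟩ := ih _ (hr ▸ hpc ▸ hlt) (by omega) hI' rfl
      exact ⟨m', by omega, hT⟩

theorem exists_wait1_of_inDoorway {p : Fin N} {s n : ℕ} (h : InDoorway s ((e.state n).pc p)) :
    ∃ m, n ≤ m ∧ (e.state m).pc p = .wait1 s 0 :=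
  e.exists_of_rank_lt p (InDoorway s) (· = .wait1 s 0) (doorwayRank N) id
    (fun m _ hsched hd => glbStep_of_inDoorway hd (hsched ▸ e.step m)) le_rfl h

theorem exists_exit2_of_exit1 {q : Fin N} {n : ℕ} (h : (e.state n).pc q = .exit1) :
    ∃ m, n ≤ m ∧ (e.state m).pc q = .exit2 := by
  refine e.exists_of_rank_lt q (· = .exit1) (· = .exit2) (fun _ => 0) nofun
    (fun m _ hsched hpc => .inl ?_) le_rfl h
  have hstep := hsched ▸ e.step m
  simp only [glbStep, hpc] at hstep
  simp [hstep]

theorem forall_isWaiting_of_forall_not_inCS {p : Fin N} {s a : ℕ}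
    (ha : IsWaiting s ((e.state a).pc p)) (hcs : ∀ m, a ≤ m → ¬ glbInCS (e.state m) p) :
    ∀ m, a ≤ m → IsWaiting s ((e.state m).pc p) ∧ (e.state m).token p = (e.state a).token p := by
  intro m hm
  induction m, hm using Nat.le_induction with
  | base => exact ⟨ha, rfl⟩
  | succ m hm ih =>
    by_cases hsched : e.sched m = p
    · obtain ⟨hw | hcs', htok⟩ := glbStep_of_isWaiting ih.1 (hsched ▸ e.step m)
      · exact ⟨hw, htok.trans ih.2⟩
      · exact absurd ⟨s, hcs'⟩ (hcs (m + 1) (by omega))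
    · obtain ⟨hpc, -, htok, -⟩ := glbStep_frame (e.step m) (Ne.symm hsched)
      rw [hpc, htok]
      exact ih

def LeavesCS : Prop :=
  ∀ (i : Fin N) (n : ℕ), glbInCS (e.state n) i → ∃ m, n ≤ m ∧ ¬ glbInCS (e.state m) i

theorem exists_exit1_of_inCS (hncs : e.LeavesCS) {q : Fin N} {n : ℕ}
    (h : glbInCS (e.state n) q) : ∃ m, n ≤ m ∧ (e.state m).pc q = .exit1 := by
  obtain ⟨m, hnm, hout⟩ := hncs q n h
  induction m, hnm using Nat.le_induction with
  | base => exact absurd h hout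
  | succ m hm ih =>
    by_cases hin : glbInCS (e.state m) q
    · obtain ⟨s, hs⟩ := hin
      rcases glbStep_of_cs hs (e.step m) with hs' | hexit
      · exact absurd ⟨s, hs'⟩ hout
      · exact ⟨m + 1, by omega, hexit⟩
    · exact ih hin

theorem exists_isWaiting_or_exit2 (hncs : e.LeavesCS) {q : Fin N} {n : ℕ}
    (h : (e.state n).pc q ≠ .remainder) :
    ∃ m, n ≤ m ∧ ((∃ s, IsWaiting s ((e.state m).pc q)) ∨ (e.state m).pc q = .exit2) := by
  have of_inDoorway {s : ℕ} (hd : InDoorway s ((e.state n).pc q)) :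
      ∃ m, n ≤ m ∧ ((∃ s, IsWaiting s ((e.state m).pc q)) ∨ (e.state m).pc q = .exit2) := by
    obtain ⟨m, hm, hw⟩ := e.exists_wait1_of_inDoorway hd
    exact ⟨m, hm, .inl ⟨s, by rw [hw]; rfl⟩⟩
  have of_exit1 (hx : ∃ m, n ≤ m ∧ (e.state m).pc q = .exit1) :
      ∃ m, n ≤ m ∧ ((∃ s, IsWaiting s ((e.state m).pc q)) ∨ (e.state m).pc q = .exit2) := by
    obtain ⟨m, hm, hx⟩ := hx
    obtain ⟨m', hm', hx'⟩ := e.exists_exit2_of_exit1 hx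
    exact ⟨m', hm.trans hm', .inr hx'⟩
  rcases hpc : (e.state n).pc q with
    _ | s | s | ⟨s, j, mm⟩ | ⟨s, mm⟩ | s | ⟨s, j⟩ | ⟨s, j⟩ | s | _ | _
  · exact absurd hpc h
  iterate 5 exact of_inDoorway (s := s) (by simp [InDoorway, hpc])
  iterate 2 exact ⟨n, le_rfl, .inl ⟨s, by simp [IsWaiting, hpc]⟩⟩
  · exact of_exit1 (e.exists_exit1_of_inCS hncs ⟨s, hpc⟩)
  · exact of_exit1 ⟨n, le_rfl, hpc⟩
  · exact ⟨n, le_rfl, .inr hpc⟩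

theorem forall_isWaitingAtMost {p r : Fin N} {s sr a : ℕ}
    (hp : ∀ m, a ≤ m → IsWaiting s ((e.state m).pc p) ∧ HasMinimalTicket (e.state m) p)
    (hsr : sr ≠ s) {m₀ : ℕ} (hm₀ : a ≤ m₀) (hr : IsWaitingAtMost sr p ((e.state m₀).pc r)) :
    ∀ m, m₀ ≤ m → IsWaitingAtMost sr p ((e.state m).pc r) := by
  intro m hm
  induction m, hm using Nat.le_induction with
  | base => exact hr
  | succ m hm ih =>
    obtain ⟨hw, hmin⟩ := hp m (hm₀.trans hm)
    exact isWaitingAtMost_of_glbStep hw (e.localInv m p) (e.localInv m r) hmin hsr ih (e.step m)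

theorem eventually_not_blocksWait1 {p : Fin N} {s a : ℕ}
    (hp : ∀ m, a ≤ m → IsWaiting s ((e.state m).pc p) ∧ HasMinimalTicket (e.state m) p)
    (r : Fin N) : ∀ᶠ m in atTop, ¬ BlocksWait1 (e.state m) r s := by
  by_cases hb : ∃ m, a ≤ m ∧ BlocksWait1 (e.state m) r s
  · obtain ⟨m₁, hm₁, hb⟩ := hb
    obtain ⟨m₂, hm₂, hw⟩ :=
      e.exists_wait1_of_inDoorway ((e.localInv m₁ r).inDoorway_of_blocksWait1 hb)
    have hstuck := e.forall_isWaitingAtMost hp hb.2.2 (hm₁.trans hm₂) ⟨0, p.val.zero_le, .inl hw⟩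
    filter_upwards [eventually_ge_atTop m₂] with m hm hbm
    have hc := ((e.localInv m r).of_isWaiting (hstuck m hm).isWaiting).2.2.1
    simp [BlocksWait1, hc] at hbm
  · exact eventually_atTop.2 ⟨a, fun m hm hbm => hb ⟨m, hm, hbm⟩⟩

theorem not_forall_isWaiting_and_hasMinimalTicket {p : Fin N} {s a : ℕ} :
    ¬ ∀ m, a ≤ m → IsWaiting s ((e.state m).pc p) ∧ HasMinimalTicket (e.state m) p := by
  intro hp
  obtain ⟨M, hM⟩ := eventually_atTop.1
    ((eventually_all.2 (e.eventually_not_blocksWait1 hp)).and (eventually_ge_atTop a))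
  obtain ⟨m, hm, hcs⟩ := e.exists_of_rank_lt p (IsWaiting s) (· = .cs s) (waitRank N) nofun
    (fun m hm hsched hw => glbStep_waitRank_lt (e.localInv m p) hw (hM m hm).1
      (hp m (hM m hm).2).2 (hsched ▸ e.step m))
    le_rfl (hp M (hM M le_rfl).2).1
  have hw := (hp m ((hM M le_rfl).2.trans hm)).1
  rw [hcs] at hw
  exact hw

theorem not_mayOvertake_of_le {p q : Fin N} {t a : ℕ} (ht : ∀ m, a ≤ m → (e.state m).token p = t)
    (hqp : q ≠ p) {m₀ : ℕ} (hm₀ : a ≤ m₀) (h : ¬ MayOvertake t p (e.state m₀) q) :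
    ∀ m, m₀ ≤ m → ¬ MayOvertake t p (e.state m) q := by
  intro m hm
  induction m, hm using Nat.le_induction with
  | base => exact h
  | succ m hm ih =>
    exact fun hq => ih (mayOvertake_of_glbStep (e.step m) (ht m (hm₀.trans hm)) hqp hq)

theorem exists_not_mayOvertake (hncs : e.LeavesCS) {p q : Fin N} {t : ℕ}
    (ih : ∀ m s, IsWaiting s ((e.state m).pc q) → (e.state m).ticket q < toLex (t, p) →
      ∃ m', m ≤ m' ∧ glbInCS (e.state m') q)
    (n : ℕ) : ∃ m, n ≤ m ∧ ¬ MayOvertake t p (e.state m) q := by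
  by_contra! H
  have not_exit2 {m : ℕ} (hm : n ≤ m) (hpc : (e.state m).pc q = .exit2) : False :=
    (e.localInv m q).not_mayOvertake (.inr hpc) (H m hm)
  obtain ⟨m₁, hm₁, ⟨s, hw⟩ | hexit⟩ := e.exists_isWaiting_or_exit2 hncs
    fun hpc => (e.localInv n q).not_mayOvertake (.inl hpc) (H n le_rfl)
  · obtain ⟨m₂, hm₂, hcs⟩ := ih m₁ s hw ((H m₁ hm₁).ticket_lt hw)
    obtain ⟨m₃, hm₃, hexit1⟩ := e.exists_exit1_of_inCS hncs hcs
    obtain ⟨m₄, hm₄, hexit2⟩ := e.exists_exit2_of_exit1 hexit1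
    exact not_exit2 (by omega) hexit2
  · exact not_exit2 hm₁ hexit

theorem exists_inCS_of_isWaiting (hncs : e.LeavesCS) {p : Fin N} {s n : ℕ}
    (hw : IsWaiting s ((e.state n).pc p)) : ∃ m, n ≤ m ∧ glbInCS (e.state m) p := by
  suffices H : ∀ x : ℕ ×ₗ Fin N, ∀ (p : Fin N) (s n : ℕ), (e.state n).ticket p = x →
      IsWaiting s ((e.state n).pc p) → ∃ m, n ≤ m ∧ glbInCS (e.state m) p from
    H _ p s n rfl hw
  intro x
  induction x using WellFoundedLT.induction with
  | _ x ih =>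
    rintro p s n rfl hw
    by_contra! hcs
    have hwait := e.forall_isWaiting_of_forall_not_inCS hw hcs
    have hev (r : Fin N) :
        ∀ᶠ m in atTop, r ≠ p → ¬ MayOvertake ((e.state n).token p) p (e.state m) r := by
      by_cases hrp : r = p
      · exact .of_forall fun _ h => (h hrp).elim
      obtain ⟨m₀, hm₀, hr⟩ := e.exists_not_mayOvertake hncs
        (fun m s' hw' hlt => ih _ hlt r s' m rfl hw') n
      filter_upwards [eventually_ge_atTop m₀] with m hm _
      exact e.not_mayOvertake_of_le (fun m hm => (hwait m hm).2) hrp hm₀ hr m hm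
    obtain ⟨a, ha⟩ := eventually_atTop.1 ((eventually_all.2 hev).and (eventually_ge_atTop n))
    exact e.not_forall_isWaiting_and_hasMinimalTicket fun m hm =>
      ⟨(hwait m (ha m hm).2).1,
        hasMinimalTicket_of_not_mayOvertake (hwait m (ha m hm).2).2 (ha m hm).1⟩

end GLBExec

/-- **Starvation freedom for the GLB algorithm.**  In every execution in which no process
stays in the critical section forever, every process that enters the entry section
eventually enters the critical section. -/
theorem glb_starvation_freedom {N : ℕ} (e : GLBExec N)
    (hncs : ∀ (i : Fin N) (n : ℕ), glbInCS (e.state n) i →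
      ∃ m, n ≤ m ∧ ¬ glbInCS (e.state m) i)
    (i : Fin N) (n : ℕ) (h : glbInEntry (e.state n) i) :
    ∃ m, n ≤ m ∧ glbInCS (e.state m) i := by
  obtain ⟨s, hd | hw⟩ := exists_inDoorway_or_isWaiting_of_glbInEntry h
  · obtain ⟨n', hn', hw⟩ := e.exists_wait1_of_inDoorway hd
    obtain ⟨m, hm, hcs⟩ := e.exists_inCS_of_isWaiting hncs (s := s) (n := n') (by rw [hw]; rfl)
    exact ⟨m, hn'.trans hm, hcs⟩
  · exact e.exists_inCS_of_isWaiting hncs hw
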